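/- Let V be a fluid algebra with operator D, and let X : ℝ → V be a differentiable curve solving the associated Euler equation, i.e. (Ẋ(t), Z) = {X(t), D X(t), Z} for all Z ∈ V and all t ∈ ℝ. Then the helicity t ↦ (X(t), D X(t)) is constant in t. -/

import Mathlib

/-! Since `D` is symmetric, the helicity has derivative `2 ⟪Ẋ, D X⟫`, and testing the Euler
equation against `Z = D X` turns this into `2 T (X, D X, D X)`, which vanishes because `T` is
alternating. -/

open scoped RealInnerProductSpace

section

variable {V : Type*} [NormedAddCommGroup V] [InnerProductSpace ℝ V]

theorem LinearMap.isSymmetric_of_inner_eq_of_symm {B : V →ₗ[ℝ] V →ₗ[ℝ] ℝ}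
    (hBsymm : ∀ x y : V, B x y = B y x) {D : V →ₗ[ℝ] V} (hD : ∀ x y : V, B x y = ⟪D x, y⟫) :
    D.IsSymmetric := fun x y => by
  rw [← hD, hBsymm, hD, real_inner_comm]

theorem LinearMap.IsSymmetric.hasDerivAt_inner_map_self [FiniteDimensional ℝ V]
    {D : V →ₗ[ℝ] V} (hD : D.IsSymmetric) {X : ℝ → V} {X' : V} {t : ℝ}
    (hX : HasDerivAt X X' t) :
    HasDerivAt (fun s => ⟪X s, D (X s)⟫) (2 * ⟪X', D (X t)⟫) t := by
  have hDX : HasDerivAt (fun s => D (X s)) (D X') t :=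
    D.toContinuousLinearMap.hasFDerivAt.comp_hasDerivAt t hX
  refine (hX.inner ℝ hDX).congr_deriv ?_
  rw [← hD, real_inner_comm]
  ring

end

theorem fluid_algebra_helicity_invariant
    {V : Type*} [NormedAddCommGroup V] [InnerProductSpace ℝ V] [FiniteDimensional ℝ V]
    (B : V →ₗ[ℝ] V →ₗ[ℝ] ℝ)
    (hBsymm : ∀ x y : V, B x y = B y x)
    (T : AlternatingMap ℝ V ℝ (Fin 3))
    (D : V →ₗ[ℝ] V)
    (hD : ∀ x y : V, B x y = ⟪D x, y⟫)
    (X X' : ℝ → V)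
    (hX : ∀ t : ℝ, HasDerivAt X (X' t) t)
    (hEuler : ∀ t : ℝ, ∀ Z : V, ⟪X' t, Z⟫ = T ![X t, D (X t), Z]) :
    ∀ s t : ℝ, ⟪X s, D (X s)⟫ = ⟪X t, D (X t)⟫ := by
  have hDsymm : D.IsSymmetric := LinearMap.isSymmetric_of_inner_eq_of_symm hBsymm hD
  have hOrth (t : ℝ) : ⟪X' t, D (X t)⟫ = 0 := by
    rw [hEuler]
    exact T.map_eq_zero_of_eq _ (by simp) (by decide : (1 : Fin 3) ≠ 2)
  have hDeriv (t : ℝ) : HasDerivAt (fun s => ⟪X s, D (X s)⟫) 0 t := by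
    simpa [hOrth] using hDsymm.hasDerivAt_inner_map_self (hX t)
  exact is_const_of_deriv_eq_zero (fun t => (hDeriv t).differentiableAt)
    (fun t => (hDeriv t).deriv)
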